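/- Column-restricted equivalence operations preserve pairs of rows: if two rows of a balanced complex orthogonal design (BCOD) with 2m columns form a pair, then after applying any finite sequence of column-restricted equivalence operations, the images of these two rows again form a pair. -/

import Mathlib

open Matrix

/-- A formal entry of a complex orthogonal design: either `0`, or `± z_i`, or `± z_i^*`.
Here `sign = true` means sign `+1`, and `conj = true` means the conjugated symbol `z_i^*`. -/
inductive CODEntry (k : ℕ) : Type where
  | zero : CODEntry k
  | var (sign : Bool) (conj : Bool) (idx : Fin k) : CODEntry k
deriving DecidableEq

namespace CODEntry

variable {k k' : ℕ}

/-- Evaluate a formal entry at an assignment of complex values to the indeterminates. -/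
def eval (z : Fin k → ℂ) : CODEntry k → ℂ
  | zero => 0
  | var s c i => (if s then (1 : ℂ) else -1) * (if c then (starRingEnd ℂ) (z i) else z i)

/-- Formal negation of an entry. -/
def neg : CODEntry k → CODEntry k
  | zero => zero
  | var s c i => var (!s) c i

/-- Formal conjugation of an entry (with `0^* = 0`). -/
def conj : CODEntry k → CODEntry k
  | zero => zero
  | var s c i => var s (!c) i

/-- Optionally negate an entry. -/
def negIf (b : Bool) (e : CODEntry k) : CODEntry k := if b then e.neg else e

/-- Rename variables according to a permutation of the indices. -/
def rename (σ : Equiv.Perm (Fin k)) : CODEntry k → CODEntry k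
  | zero => zero
  | var s c i => var s c (σ i)

/-- Negate all instances of the variable `z_j`. -/
def negVar (j : Fin k) : CODEntry k → CODEntry k
  | zero => zero
  | var s c i => if i = j then var (!s) c i else var s c i

/-- Conjugate all instances of the variable `z_j` (swap `z_j ↔ z_j^*`). -/
def conjVar (j : Fin k) : CODEntry k → CODEntry k
  | zero => zero
  | var s c i => if i = j then var s (!c) i else var s c i

/-- Transport an entry along a map of variable index sets. -/
def mapIdx (f : Fin k → Fin k') : CODEntry k → CODEntry k'
  | zero => zero
  | var s c i => var s c (f i)

/-- Whether a (nonzero) entry is a conjugated symbol `± z_i^*`. -/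
def isConj : CODEntry k → Bool
  | zero => false
  | var _ c _ => c

/-- The index of the variable occurring in an entry, if any. -/
def index : CODEntry k → Option (Fin k)
  | zero => none
  | var _ _ i => some i

end CODEntry

/-- `G` is a `[p, n, k]` complex orthogonal design (COD): for every assignment of complex
values to the indeterminates, `Gᴴ * G = (|z_1|² + … + |z_k|²) • I_n`. -/
def IsCOD {p n k : ℕ} (G : Matrix (Fin p) (Fin n) (CODEntry k)) : Prop :=
  ∀ z : Fin k → ℂ,
    (G.map (CODEntry.eval z))ᴴ * (G.map (CODEntry.eval z)) =
      ((∑ i, Complex.normSq (z i) : ℝ) : ℂ) • (1 : Matrix (Fin n) (Fin n) ℂ)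

/-- The equivalence operations on `[p, n, k]` CODs. -/
inductive EquivOp (p n k : ℕ) : Type where
  | rowPerm (σ : Equiv.Perm (Fin p))
  | rowNeg (r : Fin p)
  | colPerm (σ : Equiv.Perm (Fin n))
  | colNeg (c : Fin n)
  | varRename (σ : Equiv.Perm (Fin k))
  | varNeg (i : Fin k)
  | varConj (i : Fin k)

namespace EquivOp

variable {p n k : ℕ}

/-- Apply an equivalence operation to a matrix of formal entries. -/
def apply (G : Matrix (Fin p) (Fin n) (CODEntry k)) :
    EquivOp p n k → Matrix (Fin p) (Fin n) (CODEntry k)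
  | rowPerm σ => fun r c => G (σ r) c
  | rowNeg r₀ => fun r c => if r = r₀ then (G r c).neg else G r c
  | colPerm σ => fun r c => G r (σ c)
  | colNeg c₀ => fun r c => if c = c₀ then (G r c).neg else G r c
  | varRename σ => fun r c => (G r c).rename σ
  | varNeg i => fun r c => (G r c).negVar i
  | varConj i => fun r c => (G r c).conjVar i

/-- The operation is a column permutation. -/
def IsColPerm : EquivOp p n k → Prop
  | colPerm _ => True
  | _ => False

/-- The operation is a column negation. -/
def IsColNeg : EquivOp p n k → Prop
  | colNeg _ => True
  | _ => False

/-- The operation is a variable renaming. -/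
def IsVarRename : EquivOp p n k → Prop
  | varRename _ => True
  | _ => False

/-- Where each row of the original matrix is sent by the operation. -/
def rowMap : EquivOp p n k → Equiv.Perm (Fin p)
  | rowPerm σ => σ⁻¹
  | _ => 1

end EquivOp

/-- Apply a finite sequence of equivalence operations, in order. -/
def applyOps {p n k : ℕ} (G : Matrix (Fin p) (Fin n) (CODEntry k))
    (ops : List (EquivOp p n k)) : Matrix (Fin p) (Fin n) (CODEntry k) :=
  ops.foldl EquivOp.apply G

/-- Where each row of the original matrix is sent by a sequence of operations. -/
def opsRowMap {p n k : ℕ} (ops : List (EquivOp p n k)) : Equiv.Perm (Fin p) :=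
  ops.foldl (fun τ op => op.rowMap * τ) 1

/-- An operation on a COD with `m + m` columns is column-restricted if, in case it is a
column permutation, it is the transposition of columns `i` and `m + i` for some `i`. -/
def EquivOp.ColumnRestricted {p m k : ℕ} : EquivOp p (m + m) k → Prop
  | .colPerm σ => ∃ i : Fin m, σ = Equiv.swap (Fin.castAdd m i) (Fin.natAdd m i)
  | _ => True

/-- `G` contains the `B_i` form submatrix on the `2m` rows selected by the embedding `f`:
the block matrix `((z_i I_m, M), (−Mᴴ, z_i^* I_m))` where `M` is the top-right block. -/
def ContainsBFormWith {p m k : ℕ} (G : Matrix (Fin p) (Fin (m + m)) (CODEntry k))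
    (i : Fin k) (f : Fin (m + m) ↪ Fin p) : Prop :=
  (∀ r s : Fin m, G (f (Fin.castAdd m r)) (Fin.castAdd m s) =
      if r = s then CODEntry.var true false i else CODEntry.zero) ∧
  (∀ r s : Fin m, G (f (Fin.natAdd m r)) (Fin.natAdd m s) =
      if r = s then CODEntry.var true true i else CODEntry.zero) ∧
  (∀ r s : Fin m, G (f (Fin.natAdd m r)) (Fin.castAdd m s) =
      ((G (f (Fin.castAdd m s)) (Fin.natAdd m r)).conj).neg)

/-- As `ContainsBFormWith`, and moreover the top-right block `M` is (formally)
skew-symmetric: `Mᵀ = −M`. -/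
def ContainsSkewBFormWith {p m k : ℕ} (G : Matrix (Fin p) (Fin (m + m)) (CODEntry k))
    (i : Fin k) (f : Fin (m + m) ↪ Fin p) : Prop :=
  ContainsBFormWith G i f ∧
  ∀ r s : Fin m, G (f (Fin.castAdd m s)) (Fin.natAdd m r) =
    (G (f (Fin.castAdd m r)) (Fin.natAdd m s)).neg

/-- `G` is in `B_i` form: after equivalence operations excluding column permutations
(and not renaming variables), it contains the `B_i` form submatrix. -/
def InBForm {p m k : ℕ} (G : Matrix (Fin p) (Fin (m + m)) (CODEntry k)) (i : Fin k) : Prop :=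
  ∃ ops : List (EquivOp p (m + m) k),
    (∀ op ∈ ops, ¬ op.IsColPerm ∧ ¬ op.IsVarRename) ∧
    ∃ f, ContainsBFormWith (applyOps G ops) i f

/-- `G` is in `B_i` form with skew-symmetric block `M_i`. -/
def InSkewBForm {p m k : ℕ} (G : Matrix (Fin p) (Fin (m + m)) (CODEntry k)) (i : Fin k) : Prop :=
  ∃ ops : List (EquivOp p (m + m) k),
    (∀ op ∈ ops, ¬ op.IsColPerm ∧ ¬ op.IsVarRename) ∧
    ∃ f, ContainsSkewBFormWith (applyOps G ops) i f

/-- `G` is a balanced complex orthogonal design (BCOD) with `2m` columns: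
a COD in which every row has exactly `m` zero entries (hence `m` nonzero ones),
every row is conjugation-separated, and for each variable `z_j` it is in `B_j` form
with skew-symmetric block `M_j`. -/
def IsBCOD {p m k : ℕ} (G : Matrix (Fin p) (Fin (m + m)) (CODEntry k)) : Prop :=
  IsCOD G ∧
  (∀ r : Fin p, (Finset.univ.filter fun c => G r c = CODEntry.zero).card = m) ∧
  (∀ r : Fin p,
      (∀ c, G r c ≠ CODEntry.zero → (G r c).isConj = true) ∨
      (∀ c, G r c ≠ CODEntry.zero → (G r c).isConj = false)) ∧
  (∀ j : Fin k, InSkewBForm G j)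

/-- `G` is the direct sum of `G₁` (on top) and `G₂` (below), where `G₁` and `G₂` use
disjoint sets of indeterminates, embedded into `Fin k` via `ι₁` and `ι₂`. -/
def IsDirectSumOf {p n k p₁ p₂ k₁ k₂ : ℕ} (hp : p = p₁ + p₂)
    (G : Matrix (Fin p) (Fin n) (CODEntry k))
    (G₁ : Matrix (Fin p₁) (Fin n) (CODEntry k₁))
    (G₂ : Matrix (Fin p₂) (Fin n) (CODEntry k₂))
    (ι₁ : Fin k₁ ↪ Fin k) (ι₂ : Fin k₂ ↪ Fin k) : Prop :=
  k = k₁ + k₂ ∧ (∀ a b, ι₁ a ≠ ι₂ b) ∧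
  ∀ (r : Fin p) (c : Fin n),
    if h : (r : ℕ) < p₁ then G r c = (G₁ ⟨(r : ℕ), h⟩ c).mapIdx (fun i => ι₁ i)
    else G r c = (G₂ ⟨(r : ℕ) - p₁, by have := r.isLt; omega⟩ c).mapIdx (fun i => ι₂ i)

/-- A COD is decomposable if, after a permutation of its rows, it can be expressed as
the direct sum of two (nonempty) CODs on disjoint sets of indeterminates. -/
def IsDecomposable {p n k : ℕ} (G : Matrix (Fin p) (Fin n) (CODEntry k)) : Prop :=
  ∃ (σ : Equiv.Perm (Fin p)) (p₁ p₂ k₁ k₂ : ℕ) (hp : p = p₁ + p₂)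
    (G₁ : Matrix (Fin p₁) (Fin n) (CODEntry k₁))
    (G₂ : Matrix (Fin p₂) (Fin n) (CODEntry k₂))
    (ι₁ : Fin k₁ ↪ Fin k) (ι₂ : Fin k₂ ↪ Fin k),
    0 < p₁ ∧ 0 < p₂ ∧ IsCOD G₁ ∧ IsCOD G₂ ∧
    IsDirectSumOf hp (fun r c => G (σ r) c) G₁ G₂ ι₁ ι₂

/-- Rows `r₁` and `r₂` of `G` form a pair: if `r₁` is `(α₁,…,α_m, β₁,…,β_m)` then `r₂`
is `(±β₁^*,…,±β_m^*, ±α₁^*,…,±α_m^*)` (the signs may differ from entry to entry). -/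
def IsPairRows {p m k : ℕ} (G : Matrix (Fin p) (Fin (m + m)) (CODEntry k))
    (r₁ r₂ : Fin p) : Prop :=
  ∀ s : Fin m,
    (∃ b : Bool, G r₂ (Fin.castAdd m s) = CODEntry.negIf b ((G r₁ (Fin.natAdd m s)).conj)) ∧
    (∃ b : Bool, G r₂ (Fin.natAdd m s) = CODEntry.negIf b ((G r₁ (Fin.castAdd m s)).conj))

/-!
Every equivalence operation other than a column permutation either permutes the rows, changes
the signs of entries, or acts entrywise by a map commuting with formal negation and conjugation;
each of these visibly keeps a pair a pair. The remaining column-restricted operation, the swap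
of columns `i` and `m + i`, just exchanges the two conditions of a pair at index `i`.
-/

namespace CODEntry

variable {k : ℕ}

@[simp] lemma neg_neg (e : CODEntry k) : e.neg.neg = e := by
  cases e <;> simp [neg]

lemma conj_neg (e : CODEntry k) : e.neg.conj = e.conj.neg := by
  cases e <;> rfl

@[simp] lemma negIf_negIf (a b : Bool) (e : CODEntry k) :
    negIf a (negIf b e) = negIf (a ^^ b) e := by
  cases a <;> cases b <;> simp [negIf]

lemma ite_neg_eq_negIf (c : Prop) [Decidable c] (e : CODEntry k) :
    (if c then e.neg else e) = negIf (decide c) e := by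
  by_cases h : c <;> simp [h, negIf]

lemma map_negIf {k' : ℕ} {f : CODEntry k → CODEntry k'} (hf : ∀ e, f e.neg = (f e).neg)
    (b : Bool) (e : CODEntry k) : f (negIf b e) = negIf b (f e) := by
  cases b <;> simp [negIf, hf]

lemma conj_negIf (b : Bool) (e : CODEntry k) : (negIf b e).conj = negIf b e.conj :=
  map_negIf conj_neg b e

lemma rename_neg (σ : Equiv.Perm (Fin k)) (e : CODEntry k) :
    e.neg.rename σ = (e.rename σ).neg := by
  cases e <;> rfl

lemma rename_conj (σ : Equiv.Perm (Fin k)) (e : CODEntry k) :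
    e.conj.rename σ = (e.rename σ).conj := by
  cases e <;> rfl

lemma negVar_neg (j : Fin k) (e : CODEntry k) : e.neg.negVar j = (e.negVar j).neg := by
  cases e with
  | zero => rfl
  | var s c i => by_cases h : i = j <;> simp [h, neg, negVar]

lemma negVar_conj (j : Fin k) (e : CODEntry k) : e.conj.negVar j = (e.negVar j).conj := by
  cases e with
  | zero => rfl
  | var s c i => by_cases h : i = j <;> simp [h, conj, negVar]

lemma conjVar_neg (j : Fin k) (e : CODEntry k) : e.neg.conjVar j = (e.conjVar j).neg := by
  cases e with
  | zero => rfl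
  | var s c i => by_cases h : i = j <;> simp [h, neg, conjVar]

lemma conjVar_conj (j : Fin k) (e : CODEntry k) : e.conj.conjVar j = (e.conjVar j).conj := by
  cases e with
  | zero => rfl
  | var s c i => by_cases h : i = j <;> simp [h, conj, conjVar]

end CODEntry

namespace IsPairRows

open CODEntry

variable {p m k : ℕ} {G : Matrix (Fin p) (Fin (m + m)) (CODEntry k)} {r₁ r₂ : Fin p}

lemma map {k' : ℕ} {f : CODEntry k → CODEntry k'} (hneg : ∀ e, f e.neg = (f e).neg)
    (hconj : ∀ e, f e.conj = (f e).conj) (h : IsPairRows G r₁ r₂) :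
    IsPairRows (G.map f) r₁ r₂ := by
  intro s
  obtain ⟨⟨b₁, h₁⟩, ⟨b₂, h₂⟩⟩ := h s
  exact ⟨⟨b₁, by simp only [Matrix.map_apply, h₁, map_negIf hneg, hconj]⟩,
    ⟨b₂, by simp only [Matrix.map_apply, h₂, map_negIf hneg, hconj]⟩⟩

lemma of_eq_negIf {G' : Matrix (Fin p) (Fin (m + m)) (CODEntry k)}
    (hG' : ∀ r c, ∃ b, G' r c = negIf b (G r c)) (h : IsPairRows G r₁ r₂) :
    IsPairRows G' r₁ r₂ := by
  have signed {r c r' c'} (b : Bool) (he : G r c = negIf b (G r' c').conj) :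
      ∃ b', G' r c = negIf b' (G' r' c').conj := by
    obtain ⟨a, ha⟩ := hG' r c
    obtain ⟨a', ha'⟩ := hG' r' c'
    exact ⟨a ^^ b ^^ a', by simp [ha, ha', he, conj_negIf]⟩
  intro s
  obtain ⟨⟨b₁, h₁⟩, ⟨b₂, h₂⟩⟩ := h s
  exact ⟨signed b₁ h₁, signed b₂ h₂⟩

lemma comp_perm (σ : Equiv.Perm (Fin p)) (h : IsPairRows G r₁ r₂) :
    IsPairRows (fun r c => G (σ r) c) (σ⁻¹ r₁) (σ⁻¹ r₂) :=
  fun s => by simpa using h s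

lemma swap_cols (i : Fin m) (h : IsPairRows G r₁ r₂) :
    IsPairRows (fun r c => G r (Equiv.swap (Fin.castAdd m i) (Fin.natAdd m i) c)) r₁ r₂ := by
  intro s
  beta_reduce
  by_cases hs : s = i
  · subst hs
    simp only [Equiv.swap_apply_left, Equiv.swap_apply_right]
    exact (h s).symm
  · have hsi : (s : ℕ) ≠ i := Fin.val_ne_of_ne hs
    rw [Equiv.swap_apply_of_ne_of_ne, Equiv.swap_apply_of_ne_of_ne]
    · exact h s
    all_goals simp only [ne_eq, Fin.ext_iff, Fin.val_castAdd, Fin.val_natAdd]; omega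

lemma apply {op : EquivOp p (m + m) k} (hop : op.ColumnRestricted) (h : IsPairRows G r₁ r₂) :
    IsPairRows (op.apply G) (op.rowMap r₁) (op.rowMap r₂) := by
  cases op with
  | rowPerm σ => exact h.comp_perm σ
  | rowNeg r₀ => exact h.of_eq_negIf fun r c => ⟨_, ite_neg_eq_negIf _ _⟩
  | colPerm σ =>
    obtain ⟨i, rfl⟩ := hop
    exact h.swap_cols i
  | colNeg c₀ => exact h.of_eq_negIf fun r c => ⟨_, ite_neg_eq_negIf _ _⟩
  | varRename σ => exact h.map (rename_neg σ) (rename_conj σ)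
  | varNeg j => exact h.map (negVar_neg j) (negVar_conj j)
  | varConj j => exact h.map (conjVar_neg j) (conjVar_conj j)

end IsPairRows

lemma applyOps_concat {p n k : ℕ} (G : Matrix (Fin p) (Fin n) (CODEntry k))
    (ops : List (EquivOp p n k)) (op : EquivOp p n k) :
    applyOps G (ops ++ [op]) = op.apply (applyOps G ops) := by
  simp [applyOps]

lemma opsRowMap_concat {p n k : ℕ} (ops : List (EquivOp p n k)) (op : EquivOp p n k) :
    opsRowMap (ops ++ [op]) = op.rowMap * opsRowMap ops := by
  simp [opsRowMap]

theorem column_restricted_preserves_pairs_general {p m k : ℕ}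
    (G : Matrix (Fin p) (Fin (m + m)) (CODEntry k))
    (r₁ r₂ : Fin p) (hpair : IsPairRows G r₁ r₂)
    (ops : List (EquivOp p (m + m) k)) (hops : ∀ op ∈ ops, op.ColumnRestricted) :
    IsPairRows (applyOps G ops) (opsRowMap ops r₁) (opsRowMap ops r₂) := by
  induction ops using List.reverseRecOn with
  | nil => exact hpair
  | append_singleton ops op ih =>
    have hops' : ∀ o ∈ ops, o.ColumnRestricted := fun o ho => hops o (by simp [ho])
    rw [applyOps_concat, opsRowMap_concat]
    exact (ih hops').apply (hops op (by simp))

/-- column-restricted equivalence operations preserve pairs of rows: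
if rows `r₁`, `r₂` of a BCOD form a pair, then after any finite sequence of
column-restricted equivalence operations, the images of these two rows again form a pair. -/
theorem column_restricted_preserves_pairs {p m k : ℕ}
    (G : Matrix (Fin p) (Fin (m + m)) (CODEntry k)) (hG : IsBCOD G)
    (r₁ r₂ : Fin p) (hpair : IsPairRows G r₁ r₂)
    (ops : List (EquivOp p (m + m) k)) (hops : ∀ op ∈ ops, op.ColumnRestricted) :
    IsPairRows (applyOps G ops) (opsRowMap ops r₁) (opsRowMap ops r₂) :=
  column_restricted_preserves_pairs_general G r₁ r₂ hpair ops hops
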